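/- Composition of equilibria for two modules: if X_i and X_j are disjoint subsets of agents with X_i ⤳ X_j, then for every set of states S', Ψ_{X_i ∪ X_j}(S') = (Ψ_{X_i} ⊘ Ψ_{X_j})(Ω_{X_i ∪ X_j}(S')), where ⊘ computes the union of those →_{X_i}-attractors (terminal SCC classes of →_{X_i}) inside Ψ_{X_i}(·) that are equilibria of the relation induced by →_{X_j} on the classes of the mutual-reachability equivalence ⇌_{X_i}. -/

import Mathlib

variable {S : Type*} {A : Type*}

/-- Orbit operator: states reachable from `T` by the reflexive-transitive closure of `r`. -/
def orbit (r : S → S → Prop) (T : Set S) : Set S :=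
  {s' | ∃ s ∈ T, Relation.ReflTransGen r s s'}

/-- Equilibria operator: states in the orbit of `T` that can be reached back from
any state they reach. -/
def equil (r : S → S → Prop) (T : Set S) : Set S :=
  {s | s ∈ orbit r T ∧ ∀ s', Relation.ReflTransGen r s s' → Relation.ReflTransGen r s' s}

/-- The relation `→_X` induced by a set `X` of agents. -/
def relOf (rel : A → S → S → Prop) (X : Set A) : S → S → Prop :=
  fun s t => ∃ a ∈ X, rel a s t

/-- The M-relation `X_i ⤳ X_j`, characterized via equilibria:
`Ψ_{X_i ∪ X_j} = Ψ_{X_i} ∘ Ψ_{X_i ∪ X_j}`. -/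
def mrelE (rel : A → S → S → Prop) (Xi Xj : Set A) : Prop :=
  ∀ T : Set S, equil (relOf rel (Xi ∪ Xj)) T =
    equil (relOf rel Xi) (equil (relOf rel (Xi ∪ Xj)) T)

/-- Mutual reachability: `s ⇌ s'` iff each reaches the other. -/
def mutualReach {S : Type*} (r : S → S → Prop) (s s' : S) : Prop :=
  Relation.ReflTransGen r s s' ∧ Relation.ReflTransGen r s' s

/-- The `⇌`-class of a state. -/
def cls {S : Type*} (r : S → S → Prop) (s : S) : Set S := {t | mutualReach r s t}

/-- The `⇌_X`-classes of the states of a set `E`. -/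
def classesOf {S : Type*} (r : S → S → Prop) (E : Set S) : Set (Set S) :=
  {C | ∃ s ∈ E, C = cls r s}

/-- The relation induced by `rY` on `⇌`-classes of `rX`. -/
def indRel {S : Type*} (rX rY : S → S → Prop) (C C' : Set S) : Prop :=
  C ∈ classesOf rX Set.univ ∧ C' ∈ classesOf rX Set.univ ∧ ∃ s ∈ C, ∃ s' ∈ C', rY s s'

/-- Induced equilibria classes: classes of `E` whose `[→_Y]`-orbit stays within the
classes of `E` and is mutually reachable. -/
def indEquil {S : Type*} (rX rY : S → S → Prop) (E : Set S) : Set (Set S) :=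
  {C ∈ classesOf rX E |
    (∀ C', Relation.ReflTransGen (indRel rX rY) C C' → C' ∈ classesOf rX E) ∧
    (∀ C' ∈ classesOf rX Set.univ, Relation.ReflTransGen (indRel rX rY) C C' →
      Relation.ReflTransGen (indRel rX rY) C' C)}

/-- The composition operator `⊘`: `(Ψ_X ⊘ Ψ_Y)(T)` is the union (`Flatten`) of the
induced equilibria classes of `[→_Y]_{⇌_X}` among the classes of `Ψ_X(T)`. -/
def oslash {S : Type*} (rX rY : S → S → Prop) (T : Set S) : Set S :=
  ⋃₀ indEquil rX rY (equil rX T)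

section AuxLemmas

variable {ri rj r : S → S → Prop}

lemma aux_mem_cls_self (ri : S → S → Prop) (s : S) : s ∈ cls ri s :=
  ⟨Relation.ReflTransGen.refl, Relation.ReflTransGen.refl⟩

lemma aux_cls_eq_of_mutual {a b : S} (h : mutualReach ri a b) : cls ri a = cls ri b := by
  ext t
  constructor
  · rintro ⟨h1, h2⟩; exact ⟨h.2.trans h1, h2.trans h.1⟩
  · rintro ⟨h1, h2⟩; exact ⟨h.1.trans h1, h2.trans h.2⟩

lemma aux_relOf_union (rel : A → S → S → Prop) (Xi Xj : Set A) (s t : S) :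
    relOf rel (Xi ∪ Xj) s t ↔ relOf rel Xi s t ∨ relOf rel Xj s t := by
  constructor
  · rintro ⟨a, ha | ha, h⟩
    · exact Or.inl ⟨a, ha, h⟩
    · exact Or.inr ⟨a, ha, h⟩
  · rintro (⟨a, ha, h⟩ | ⟨a, ha, h⟩)
    · exact ⟨a, Or.inl ha, h⟩
    · exact ⟨a, Or.inr ha, h⟩

/-- Lifting lemma: a chain of induced-relation steps between classes lifts to
reachability between arbitrary representatives. -/
lemma aux_lift (hri : ∀ ⦃s t : S⦄, ri s t → r s t) (hrj : ∀ ⦃s t : S⦄, rj s t → r s t)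
    {D D' : Set S} (h : Relation.ReflTransGen (indRel ri rj) D D')
    (hD : D ∈ classesOf ri Set.univ) :
    ∀ u ∈ D, ∀ u' ∈ D', Relation.ReflTransGen r u u' := by
  induction h with
  | refl =>
    rintro u hu u' hu'
    obtain ⟨d, -, rfl⟩ := hD
    exact Relation.ReflTransGen.mono hri _ _ (hu.2.trans hu'.1)
  | tail h1 h2 ih =>
    rintro u hu u' hu'
    obtain ⟨hD1, hD', v, hv, v', hv', hvv'⟩ := h2
    obtain ⟨d', -, rfl⟩ := hD'
    exact ((ih u hu v hv).tail (hrj hvv')).trans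
      (Relation.ReflTransGen.mono hri _ _ (hv'.2.trans hu'.1))

/-- If `s` lies in an equilibrium set closed under `r`-reachability with the
`ri`-return property, then reachability lifts to the induced relation on classes. -/
lemma aux_indRel_star (hr : ∀ s t, r s t ↔ ri s t ∨ rj s t) {E : Set S}
    (hEc : ∀ s ∈ E, ∀ t, Relation.ReflTransGen r s t → t ∈ E)
    (hEret : ∀ s ∈ E, ∀ t, Relation.ReflTransGen ri s t → Relation.ReflTransGen ri t s)
    {s t : S} (hs : s ∈ E) (h : Relation.ReflTransGen r s t) :
    Relation.ReflTransGen (indRel ri rj) (cls ri s) (cls ri t) := by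
  induction h with
  | refl => exact Relation.ReflTransGen.refl
  | @tail u v h1 h2 ih =>
    have hu : u ∈ E := hEc s hs u h1
    rcases (hr u v).1 h2 with hi | hj
    · have : cls ri u = cls ri v :=
        aux_cls_eq_of_mutual ⟨Relation.ReflTransGen.single hi,
          hEret u hu v (Relation.ReflTransGen.single hi)⟩
      rwa [← this]
    · exact ih.tail ⟨⟨u, trivial, rfl⟩, ⟨v, trivial, rfl⟩, u, aux_mem_cls_self ri u, v,
        aux_mem_cls_self ri v, hj⟩

/-- Every state reachable from a class in `indEquil` lies in a class of `F`
reachable via the induced relation. -/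
lemma aux_reach_class (hr : ∀ s t, r s t ↔ ri s t ∨ rj s t) {F : Set S} {C : Set S}
    (hC : C ∈ classesOf ri F)
    (hP : ∀ C', Relation.ReflTransGen (indRel ri rj) C C' → C' ∈ classesOf ri F)
    (hFret : ∀ s ∈ F, ∀ t, Relation.ReflTransGen ri s t → Relation.ReflTransGen ri t s)
    {s t : S} (hs : s ∈ C) (h : Relation.ReflTransGen r s t) :
    ∃ D, Relation.ReflTransGen (indRel ri rj) C D ∧ t ∈ D ∧ D ∈ classesOf ri F := by
  induction h with
  | refl => exact ⟨C, Relation.ReflTransGen.refl, hs, hC⟩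
  | @tail u v h1 h2 ih =>
    obtain ⟨D, hCD, huD, d, hdF, rfl⟩ := ih
    rcases (hr u v).1 h2 with hi | hj
    · have hdv : Relation.ReflTransGen ri d v := huD.1.tail hi
      exact ⟨cls ri d, hCD, ⟨hdv, hFret d hdF v hdv⟩, d, hdF, rfl⟩
    · have step : indRel ri rj (cls ri d) (cls ri v) :=
        ⟨⟨d, trivial, rfl⟩, ⟨v, trivial, rfl⟩, u, huD, v, aux_mem_cls_self ri v, hj⟩
      exact ⟨cls ri v, hCD.tail step, aux_mem_cls_self ri v, hP _ (hCD.tail step)⟩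

end AuxLemmas

theorem composition_of_equilibria_two_modules
    (rel : A → S → S → Prop) [Finite S] (Xi Xj : Set A)
    (hdisj : Disjoint Xi Xj) (hm : mrelE rel Xi Xj) (T : Set S) :
    equil (relOf rel (Xi ∪ Xj)) T =
      oslash (relOf rel Xi) (relOf rel Xj) (orbit (relOf rel (Xi ∪ Xj)) T) := by
  set r := relOf rel (Xi ∪ Xj) with hrdef
  set ri := relOf rel Xi with hridef
  set rj := relOf rel Xj with hrjdef
  have hr : ∀ s t, r s t ↔ ri s t ∨ rj s t := aux_relOf_union rel Xi Xj
  have hri : ∀ ⦃s t : S⦄, ri s t → r s t := fun s t h => (hr s t).2 (Or.inl h)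
  have hrj : ∀ ⦃s t : S⦄, rj s t → r s t := fun s t h => (hr s t).2 (Or.inr h)
  set O := orbit r T with hOdef
  set E := equil r T with hEdef
  set F := equil ri O with hFdef
  -- basic closure properties
  have hEO : E ⊆ O := fun s hs => hs.1
  have hOc : ∀ s ∈ O, ∀ t, Relation.ReflTransGen r s t → t ∈ O := by
    rintro s ⟨w, hw, hws⟩ t hst
    exact ⟨w, hw, hws.trans hst⟩
  have hEc : ∀ s ∈ E, ∀ t, Relation.ReflTransGen r s t → t ∈ E := by
    rintro s ⟨hsO, hsret⟩ t hst
    refine ⟨hOc s hsO t hst, fun v htv => ?_⟩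
    exact (hsret v (hst.trans htv)).trans hst
  have hEret : ∀ s ∈ E, ∀ t, Relation.ReflTransGen ri s t → Relation.ReflTransGen ri t s := by
    intro s hs t hst
    have hs' : s ∈ equil ri E := by rw [hEdef, hm T] at hs; exact hs
    exact hs'.2 t hst
  have hEF : E ⊆ F := by
    intro s hs
    exact ⟨⟨s, hEO hs, Relation.ReflTransGen.refl⟩, hEret s hs⟩
  have hFret : ∀ s ∈ F, ∀ t, Relation.ReflTransGen ri s t → Relation.ReflTransGen ri t s :=
    fun s hs => hs.2
  have hFO : F ⊆ O := by
    rintro s ⟨⟨o, hoO, hos⟩, -⟩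
    exact hOc o hoO s (Relation.ReflTransGen.mono hri _ _ hos)
  ext s
  constructor
  · -- ⊆ : every equilibrium state lies in its own class, which is an induced equilibrium
    intro hs
    have hsF : s ∈ F := hEF hs
    have hsC : s ∈ cls ri s := aux_mem_cls_self ri s
    -- property (1)
    have hP : ∀ C', Relation.ReflTransGen (indRel ri rj) (cls ri s) C' →
        C' ∈ classesOf ri F := by
      intro C' hC'
      rcases hC'.cases_tail with heq | ⟨D1, hD1, hstep⟩
      · rw [heq]; exact ⟨s, hsF, rfl⟩
      · obtain ⟨-, ⟨u, -, rfl⟩, -⟩ := hstep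
        have hsu : Relation.ReflTransGen r s u :=
          aux_lift hri hrj hC' ⟨s, trivial, rfl⟩ s hsC u (aux_mem_cls_self ri u)
        exact ⟨u, hEF (hEc s hs u hsu), rfl⟩
    -- property (2)
    have hQ : ∀ C' ∈ classesOf ri Set.univ,
        Relation.ReflTransGen (indRel ri rj) (cls ri s) C' →
        Relation.ReflTransGen (indRel ri rj) C' (cls ri s) := by
      rintro C' ⟨u, -, rfl⟩ hC'
      have hsu : Relation.ReflTransGen r s u :=
        aux_lift hri hrj hC' ⟨s, trivial, rfl⟩ s hsC u (aux_mem_cls_self ri u)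
      have huE : u ∈ E := hEc s hs u hsu
      exact aux_indRel_star hr hEc hEret huE (hs.2 u hsu)
    exact ⟨cls ri s, ⟨⟨s, hsF, rfl⟩, hP, hQ⟩, hsC⟩
  · -- ⊇ : every state of an induced equilibrium class is an equilibrium of `r`
    rintro ⟨C, ⟨⟨d, hdF, rfl⟩, hP, hQ⟩, hsC⟩
    have hsO : s ∈ O := hOc d (hFO hdF) s (Relation.ReflTransGen.mono hri _ _ hsC.1)
    refine ⟨hsO, fun t hst => ?_⟩
    obtain ⟨D, hCD, htD, e, heF, rfl⟩ :=
      aux_reach_class hr ⟨d, hdF, rfl⟩ hP hFret hsC hst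
    have hback : Relation.ReflTransGen (indRel ri rj) (cls ri e) (cls ri d) :=
      hQ (cls ri e) ⟨e, trivial, rfl⟩ hCD
    exact aux_lift hri hrj hback ⟨e, trivial, rfl⟩ t htD s hsC
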